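/- Let k be a field, n a natural number, and W a Lagrangian subspace of k^n ⊕ k^n with respect to the standard symplectic form. Then there exists a linear map g belonging to the submonoid (under composition) of linear endomorphisms of k^n ⊕ k^n generated by the set of gates {F_i : i ∈ Fin n} ∪ {S_{a,i} : a ∈ k, i ∈ Fin n} ∪ {C_{a,i,j} : a ∈ k, i,j ∈ Fin n, i ≠ j} such that W is the image under g of the standard Lagrangian subspace {(x, 0) : x ∈ k^n}. -/

import Mathlib

/-!
Write vectors as `(x, z)`. It suffices to find a product `g` of gates with `z = 0` on `g W`:
every gate has an inverse in the monoid (`F_i⁴ = 1`, `S_{a,i} S_{-a,i} = C_{a,i,j} C_{-a,i,j} = 1`)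
and preserves `ω`, so for `p` with `z(p) = 0` and `w ∈ W` we get `ω(g⁻¹p, w) = ω(p, gw) = 0`,
whence `g⁻¹p ∈ W` because `W` is Lagrangian.

The coordinates `zᵢ` are cleared one at a time, without touching the `z_l`, `l ≠ i`. If on `W`
we have `zᵢ = c xᵢ + ∑_{j ≠ i} a_j z_j`, the gates `C_{a_j,i,j}` followed by `S_{-c,i}` clear `zᵢ`.
Otherwise some `w ∈ W` has `z(w) = zᵢ(w) eᵢ ≠ 0`, and isotropy against `w` forces `xᵢ = 0` on
every `u ∈ W` with `z(u) = 0`; after `F_i`, which makes `-xᵢ` the new `zᵢ`, the first case applies.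
-/

namespace Statement15

variable {k : Type*} [Field k]

/-- Dot product on `k^n`. -/
def dot {n : ℕ} (x y : Fin n → k) : k := ∑ i, x i * y i

/-- The standard symplectic form on `k^n ⊕ k^n`:
`ω((x,z),(x',z')) = ⟨x,z'⟩ − ⟨z,x'⟩`. -/
def sf {n : ℕ} (v w : (Fin n → k) × (Fin n → k)) : k :=
  dot v.1 w.2 - dot v.2 w.1

/-- The Fourier gate `F_i`, as a linear endomorphism of `k^n ⊕ k^n`:
it replaces the coordinates `(xᵢ, zᵢ)` by `(zᵢ, −xᵢ)`. -/
def Fgate {n : ℕ} (i : Fin n) : Module.End k ((Fin n → k) × (Fin n → k)) :=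
  (LinearMap.pi fun j => if j = i
      then (LinearMap.proj i).comp (LinearMap.snd k (Fin n → k) (Fin n → k))
      else (LinearMap.proj j).comp (LinearMap.fst k (Fin n → k) (Fin n → k))).prod
  (LinearMap.pi fun j => if j = i
      then -((LinearMap.proj i).comp (LinearMap.fst k (Fin n → k) (Fin n → k)))
      else (LinearMap.proj j).comp (LinearMap.snd k (Fin n → k) (Fin n → k)))

/-- The phase gate `S_{a,i}`, as a linear endomorphism of `k^n ⊕ k^n`:
it replaces `zᵢ` by `zᵢ + a·xᵢ`. -/
def Sgate {n : ℕ} (a : k) (i : Fin n) :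
    Module.End k ((Fin n → k) × (Fin n → k)) :=
  (LinearMap.fst k (Fin n → k) (Fin n → k)).prod
  (LinearMap.pi fun j => if j = i
      then (LinearMap.proj i).comp (LinearMap.snd k (Fin n → k) (Fin n → k)) +
        a • (LinearMap.proj i).comp (LinearMap.fst k (Fin n → k) (Fin n → k))
      else (LinearMap.proj j).comp (LinearMap.snd k (Fin n → k) (Fin n → k)))

/-- The controlled gate `C_{a,i,j}`, as a linear endomorphism of `k^n ⊕ k^n`:
it replaces `xⱼ` by `xⱼ + a·xᵢ` and `zᵢ` by `zᵢ − a·zⱼ`. -/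
def Cgate {n : ℕ} (a : k) (i j : Fin n) :
    Module.End k ((Fin n → k) × (Fin n → k)) :=
  (LinearMap.pi fun l => if l = j
      then (LinearMap.proj j).comp (LinearMap.fst k (Fin n → k) (Fin n → k)) +
        a • (LinearMap.proj i).comp (LinearMap.fst k (Fin n → k) (Fin n → k))
      else (LinearMap.proj l).comp (LinearMap.fst k (Fin n → k) (Fin n → k))).prod
  (LinearMap.pi fun l => if l = i
      then (LinearMap.proj i).comp (LinearMap.snd k (Fin n → k) (Fin n → k)) -
        a • (LinearMap.proj j).comp (LinearMap.snd k (Fin n → k) (Fin n → k))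
      else (LinearMap.proj l).comp (LinearMap.snd k (Fin n → k) (Fin n → k)))

open Finset Function

variable {n : ℕ}

local notation "V" => (Fin n → k) × (Fin n → k)

lemma Fgate_apply_fst (i : Fin n) (v : V) : (Fgate i v).1 = update v.1 i (v.2 i) := by
  funext l; by_cases h : l = i <;> simp [Fgate, h]

lemma Fgate_apply_snd (i : Fin n) (v : V) : (Fgate i v).2 = update v.2 i (-v.1 i) := by
  funext l; by_cases h : l = i <;> simp [Fgate, h]

lemma Sgate_apply_fst (a : k) (i : Fin n) (v : V) : (Sgate a i v).1 = v.1 := rfl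

lemma Sgate_apply_snd (a : k) (i : Fin n) (v : V) :
    (Sgate a i v).2 = update v.2 i (v.2 i + a * v.1 i) := by
  funext l; by_cases h : l = i <;> simp [Sgate, h]

lemma Cgate_apply_fst (a : k) (i j : Fin n) (v : V) :
    (Cgate a i j v).1 = update v.1 j (v.1 j + a * v.1 i) := by
  funext l; by_cases h : l = j <;> simp [Cgate, h]

lemma Cgate_apply_snd (a : k) (i j : Fin n) (v : V) :
    (Cgate a i j v).2 = update v.2 i (v.2 i - a * v.2 j) := by
  funext l; by_cases h : l = i <;> simp [Cgate, h]

lemma sf_eq_sum (v w : V) : sf v w = ∑ l, (v.1 l * w.2 l - v.2 l * w.1 l) := by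
  simp [sf, dot, sum_sub_distrib]

lemma sf_eq_zero_of_snd_eq_zero {v w : V} (hv : v.2 = 0) (hw : w.2 = 0) : sf v w = 0 := by
  simp [sf, dot, hv, hw]

lemma sf_Fgate (i : Fin n) (v w : V) : sf (Fgate i v) (Fgate i w) = sf v w := by
  simp only [sf_eq_sum, Fgate_apply_fst, Fgate_apply_snd]
  refine sum_congr rfl fun l _ => ?_
  by_cases h : l = i
  · subst h; simp only [update_self]; ring
  · simp [h]

lemma sf_Sgate (a : k) (i : Fin n) (v w : V) : sf (Sgate a i v) (Sgate a i w) = sf v w := by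
  simp only [sf_eq_sum, Sgate_apply_fst, Sgate_apply_snd]
  refine sum_congr rfl fun l _ => ?_
  by_cases h : l = i
  · subst h; simp only [update_self]; ring
  · simp [h]

lemma sf_Cgate (a : k) {i j : Fin n} (hij : i ≠ j) (v w : V) :
    sf (Cgate a i j v) (Cgate a i j w) = sf v w := by
  have hterm : ∀ l, (Cgate a i j v).1 l * (Cgate a i j w).2 l -
      (Cgate a i j v).2 l * (Cgate a i j w).1 l = v.1 l * w.2 l - v.2 l * w.1 l +
        ((if l = j then a * (v.1 i * w.2 j - v.2 j * w.1 i) else 0) -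
          if l = i then a * (v.1 i * w.2 j - v.2 j * w.1 i) else 0) := by
    intro l
    simp only [Cgate_apply_fst, Cgate_apply_snd, update_apply]
    by_cases hj : l = j
    · subst hj; simp only [if_true, hij.symm, if_false]; ring
    · by_cases hi : l = i
      · subst hi; simp only [if_true, hij, if_false]; ring
      · simp only [hi, hj, if_false]; ring
  simp only [sf_eq_sum, hterm, sum_add_distrib, sum_sub_distrib, sum_ite_eq', mem_univ, if_true,
    sub_self, add_zero]

variable (k n) in
def gates : Set (Module.End k V) :=
  {h | ∃ i : Fin n, h = Fgate i} ∪ {h | ∃ (a : k) (i : Fin n), h = Sgate a i} ∪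
    {h | ∃ (a : k) (i j : Fin n), i ≠ j ∧ h = Cgate a i j}

lemma Fgate_mem_closure (i : Fin n) : Fgate i ∈ Submonoid.closure (gates k n) :=
  Submonoid.subset_closure (Or.inl (Or.inl ⟨i, rfl⟩))

lemma Sgate_mem_closure (a : k) (i : Fin n) : Sgate a i ∈ Submonoid.closure (gates k n) :=
  Submonoid.subset_closure (Or.inl (Or.inr ⟨a, i, rfl⟩))

lemma Cgate_mem_closure (a : k) {i j : Fin n} (hij : i ≠ j) :
    Cgate a i j ∈ Submonoid.closure (gates k n) :=
  Submonoid.subset_closure (Or.inr ⟨a, i, j, hij, rfl⟩)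

lemma sf_apply_of_mem_closure {g : Module.End k V} (hg : g ∈ Submonoid.closure (gates k n))
    (v w : V) : sf (g v) (g w) = sf v w := by
  induction hg using Submonoid.closure_induction generalizing v w with
  | one => rfl
  | mul g₁ g₂ _ _ ih₁ ih₂ => rw [Module.End.mul_apply, Module.End.mul_apply, ih₁, ih₂]
  | mem g hg =>
    rcases hg with (⟨i, rfl⟩ | ⟨a, i, rfl⟩) | ⟨a, i, j, hij, rfl⟩
    exacts [sf_Fgate i v w, sf_Sgate a i v w, sf_Cgate a hij v w]

lemma Fgate_pow_four (i : Fin n) : (Fgate i : Module.End k V) ^ 4 = 1 := by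
  refine LinearMap.ext fun v => Prod.ext (funext fun l => ?_) (funext fun l => ?_) <;>
    by_cases h : l = i <;> simp [pow_succ, Fgate_apply_fst, Fgate_apply_snd, h]

lemma Sgate_neg_mul (a : k) (i : Fin n) : Sgate (-a) i * Sgate a i = (1 : Module.End k V) := by
  refine LinearMap.ext fun v => Prod.ext rfl (funext fun l => ?_)
  by_cases h : l = i <;> simp [Sgate_apply_fst, Sgate_apply_snd, h]

lemma Cgate_neg_mul (a : k) {i j : Fin n} (hij : i ≠ j) :
    Cgate (-a) i j * Cgate a i j = (1 : Module.End k V) := by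
  refine LinearMap.ext fun v => Prod.ext (funext fun l => ?_) (funext fun l => ?_)
  · by_cases h : l = j <;> simp [Cgate_apply_fst, h, hij]
  · by_cases h : l = i <;> simp [Cgate_apply_snd, h, hij.symm]

lemma exists_inverse_mem_closure {M : Type*} [Monoid M] {s : Set M}
    (hs : ∀ x ∈ s, ∃ y ∈ Submonoid.closure s, y * x = 1 ∧ x * y = 1) {x : M}
    (hx : x ∈ Submonoid.closure s) : ∃ y ∈ Submonoid.closure s, y * x = 1 ∧ x * y = 1 := by
  induction hx using Submonoid.closure_induction with
  | mem x hx => exact hs x hx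
  | one => exact ⟨1, one_mem _, one_mul 1, one_mul 1⟩
  | mul x₁ x₂ _ _ ih₁ ih₂ =>
    obtain ⟨y₁, hy₁, hl₁, hr₁⟩ := ih₁
    obtain ⟨y₂, hy₂, hl₂, hr₂⟩ := ih₂
    refine ⟨y₂ * y₁, mul_mem hy₂ hy₁, ?_, ?_⟩
    · rw [mul_assoc, ← mul_assoc y₁, hl₁, one_mul, hl₂]
    · rw [mul_assoc, ← mul_assoc x₂, hr₂, one_mul, hr₁]

lemma exists_inverse_of_mem_gates {g : Module.End k V} (hg : g ∈ gates k n) :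
    ∃ g' ∈ Submonoid.closure (gates k n), g' * g = 1 ∧ g * g' = 1 := by
  rcases hg with (⟨i, rfl⟩ | ⟨a, i, rfl⟩) | ⟨a, i, j, hij, rfl⟩
  · exact ⟨Fgate i ^ 3, pow_mem (Fgate_mem_closure i) 3, by rw [← pow_succ, Fgate_pow_four],
      by rw [← pow_succ', Fgate_pow_four]⟩
  · exact ⟨Sgate (-a) i, Sgate_mem_closure _ _, Sgate_neg_mul a i,
      by simpa using Sgate_neg_mul (-a) i⟩
  · exact ⟨Cgate (-a) i j, Cgate_mem_closure _ hij, Cgate_neg_mul a hij,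
      by simpa using Cgate_neg_mul (-a) hij⟩

def IsIsotropic (W : Submodule k V) : Prop := ∀ v ∈ W, ∀ w ∈ W, sf v w = 0

lemma IsIsotropic.map_of_mem_closure {W : Submodule k V} (hW : IsIsotropic W)
    {g : Module.End k V} (hg : g ∈ Submonoid.closure (gates k n)) : IsIsotropic (W.map g) := by
  rintro _ ⟨v, hv, rfl⟩ _ ⟨w, hw, rfl⟩
  rw [sf_apply_of_mem_closure hg]
  exact hW v hv w hw

def SndDetermined (W : Submodule k V) (i : Fin n) : Prop :=
  ∀ w ∈ W, w.1 i = 0 → (∀ j ≠ i, w.2 j = 0) → w.2 i = 0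

lemma SndDetermined.exists_eq_add_sum {W : Submodule k V} {i : Fin n} (h : SndDetermined W i) :
    ∃ (c : k) (a : Fin n → k), ∀ v ∈ W, v.2 i = c * v.1 i + ∑ j ∈ univ.erase i, a j * v.2 j := by
  let L : Fin n → W →ₗ[k] k := fun j =>
    (if j = i then (LinearMap.proj i).comp (LinearMap.fst k _ _)
      else (LinearMap.proj j).comp (LinearMap.snd k _ _)).comp W.subtype
  have hL : ∀ j (w : W), L j w = if j = i then (w : V).1 i else (w : V).2 j := by
    intro j w; by_cases hj : j = i <;> simp [L, hj]
  have hker : ⨅ j, LinearMap.ker (L j) ≤ LinearMap.ker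
      (((LinearMap.proj i).comp (LinearMap.snd k (Fin n → k) (Fin n → k))).comp W.subtype) := by
    intro w hw
    simp only [Submodule.mem_iInf, LinearMap.mem_ker, hL] at hw
    exact h w w.2 (by simpa using hw i) fun j hj => by simpa [hj] using hw j
  obtain ⟨c, hc⟩ :=
    (Submodule.mem_span_range_iff_exists_fun k).1 (mem_span_of_iInf_ker_le_ker hker)
  refine ⟨c i, c, fun v hv => ?_⟩
  have := LinearMap.congr_fun hc ⟨v, hv⟩
  rw [LinearMap.sum_apply, ← add_sum_erase _ _ (mem_univ i)] at this
  simp only [LinearMap.smul_apply, hL, if_true, smul_eq_mul] at this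
  rwa [sum_congr rfl fun j hj => by rw [if_neg (ne_of_mem_erase hj)], eq_comm] at this

lemma exists_mem_closure_snd_eq_update_sub_sum (a : Fin n → k) {i : Fin n}
    {t : Finset (Fin n)} (hi : i ∉ t) :
    ∃ g ∈ Submonoid.closure (gates k n), ∀ v : V,
      (g v).1 i = v.1 i ∧ (g v).2 = update v.2 i (v.2 i - ∑ j ∈ t, a j * v.2 j) := by
  induction t using Finset.induction_on with
  | empty => exact ⟨1, one_mem _, fun v => by simp⟩
  | insert j t hjt ih =>
    have hij : i ≠ j := fun h => hi (h ▸ mem_insert_self j t)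
    have hit : i ∉ t := fun h => hi (mem_insert_of_mem h)
    obtain ⟨g, hg, hgv⟩ := ih hit
    refine ⟨g * Cgate (a j) i j, mul_mem hg (Cgate_mem_closure _ hij), fun v => ⟨?_, ?_⟩⟩
    · rw [Module.End.mul_apply, (hgv _).1, Cgate_apply_fst, update_of_ne hij]
    · have hsum : ∑ l ∈ t, a l * (Cgate (a j) i j v).2 l = ∑ l ∈ t, a l * v.2 l :=
        sum_congr rfl fun l hl => by
          rw [Cgate_apply_snd, update_of_ne (ne_of_mem_of_not_mem hl hit)]
      rw [Module.End.mul_apply, (hgv _).2, hsum, Cgate_apply_snd, update_idem, update_self,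
        sum_insert hjt, sub_sub]

lemma SndDetermined.exists_mem_closure_clear {W : Submodule k V} {i : Fin n}
    (h : SndDetermined W i) : ∃ g ∈ Submonoid.closure (gates k n),
      (∀ v : V, ∀ l ≠ i, (g v).2 l = v.2 l) ∧ ∀ v ∈ W, (g v).2 i = 0 := by
  obtain ⟨c, a, hca⟩ := h.exists_eq_add_sum
  obtain ⟨g, hg, hgv⟩ := exists_mem_closure_snd_eq_update_sub_sum a (notMem_erase i univ)
  refine ⟨Sgate (-c) i * g, mul_mem (Sgate_mem_closure _ _) hg, fun v l hl => ?_, fun v hv => ?_⟩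
  · rw [Module.End.mul_apply, Sgate_apply_snd, update_of_ne hl, (hgv v).2, update_of_ne hl]
  · rw [Module.End.mul_apply, Sgate_apply_snd, update_self, (hgv v).1, (hgv v).2, update_self,
      hca v hv]
    ring

lemma IsIsotropic.sndDetermined_map_Fgate {W : Submodule k V} (hW : IsIsotropic W) {i : Fin n}
    (h : ¬SndDetermined W i) : SndDetermined (W.map (Fgate i)) i := by
  obtain ⟨w, hw, -, hw2, hwi⟩ : ∃ w ∈ W, w.1 i = 0 ∧ (∀ j ≠ i, w.2 j = 0) ∧ w.2 i ≠ 0 := by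
    simpa [SndDetermined] using h
  rintro _ ⟨u, huW, rfl⟩ hu1 hu2
  have hu : u.2 = 0 := by
    funext j
    by_cases hj : j = i
    · subst hj; simpa [Fgate_apply_fst] using hu1
    · simpa [Fgate_apply_snd, hj] using hu2 j hj
  have hwu : sf w u = -(w.2 i * u.1 i) := by
    simp only [sf, dot, hu, Pi.zero_apply, mul_zero, sum_const_zero, zero_sub]
    rw [sum_eq_single i (fun j _ hj => by rw [hw2 j hj, zero_mul]) (absurd (mem_univ i))]
  have : u.1 i = 0 := by simpa [hwi, hwu] using hW w hw u huW
  simp [Fgate_apply_snd, this]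

lemma IsIsotropic.exists_mem_closure_clear {W : Submodule k V} (hW : IsIsotropic W) (i : Fin n) :
    ∃ g ∈ Submonoid.closure (gates k n),
      (∀ v : V, ∀ l ≠ i, (g v).2 l = v.2 l) ∧ ∀ v ∈ W, (g v).2 i = 0 := by
  by_cases h : SndDetermined W i
  · exact h.exists_mem_closure_clear
  obtain ⟨g, hg, hgl, hgW⟩ := (hW.sndDetermined_map_Fgate h).exists_mem_closure_clear
  refine ⟨g * Fgate i, mul_mem hg (Fgate_mem_closure i), fun v l hl => ?_,
    fun v hv => hgW _ (Submodule.mem_map_of_mem hv)⟩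
  rw [Module.End.mul_apply, hgl _ l hl, Fgate_apply_snd, update_of_ne hl]

lemma IsIsotropic.exists_mem_closure_snd_eq_zero {W : Submodule k V} (hW : IsIsotropic W) :
    ∃ g ∈ Submonoid.closure (gates k n), ∀ v ∈ W, (g v).2 = 0 := by
  suffices ∀ s : Finset (Fin n), ∃ g ∈ Submonoid.closure (gates k n),
      ∀ v ∈ W, ∀ j ∈ s, (g v).2 j = 0 by
    obtain ⟨g, hg, h⟩ := this univ
    exact ⟨g, hg, fun v hv => funext fun j => h v hv j (mem_univ j)⟩
  intro s
  induction s using Finset.induction_on with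
  | empty => exact ⟨1, one_mem _, by simp⟩
  | insert i s _ ih =>
    obtain ⟨g, hg, hgW⟩ := ih
    obtain ⟨g₀, hg₀, hg₀l, hg₀i⟩ := (hW.map_of_mem_closure hg).exists_mem_closure_clear i
    refine ⟨g₀ * g, mul_mem hg₀ hg, fun v hv j hj => ?_⟩
    rw [Module.End.mul_apply]
    rcases eq_or_ne j i with rfl | hji
    · exact hg₀i _ (Submodule.mem_map_of_mem hv)
    · rw [hg₀l _ j hji]
      exact hgW v hv j ((mem_insert.1 hj).resolve_left hji)

/-- Every Lagrangian subspace `W` of `k^n ⊕ k^n` is the image of the standard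
Lagrangian subspace `{(x,0)}` under a linear map `g` in the submonoid (under
composition) of linear endomorphisms generated by the gates `F_i`, `S_{a,i}`
and `C_{a,i,j}` (`i ≠ j`). -/
theorem statement15 (n : ℕ) (W : Submodule k ((Fin n → k) × (Fin n → k)))
    (hW : ∀ v : (Fin n → k) × (Fin n → k), v ∈ W ↔ ∀ w ∈ W, sf v w = 0) :
    ∃ g : Module.End k ((Fin n → k) × (Fin n → k)),
      g ∈ Submonoid.closure
          ({h | ∃ i : Fin n, h = Fgate i} ∪
           {h | ∃ (a : k) (i : Fin n), h = Sgate a i} ∪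
           {h | ∃ (a : k) (i j : Fin n), i ≠ j ∧ h = Cgate a i j}) ∧
        (W : Set ((Fin n → k) × (Fin n → k))) =
          ⇑g '' {p : (Fin n → k) × (Fin n → k) | p.2 = 0} := by
  obtain ⟨g, hg, hgW⟩ := IsIsotropic.exists_mem_closure_snd_eq_zero fun v hv => (hW v).1 hv
  obtain ⟨g', hg', hg'g, hgg'⟩ :=
    exists_inverse_mem_closure (fun _ => exists_inverse_of_mem_gates) hg
  refine ⟨g', hg', Set.Subset.antisymm (fun v hv => ⟨g v, hgW v hv, ?_⟩) ?_⟩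
  · rw [← Module.End.mul_apply, hg'g, Module.End.one_apply]
  rintro _ ⟨p, hp, rfl⟩
  refine (hW _).2 fun w hw => ?_
  rw [← sf_apply_of_mem_closure hg, ← Module.End.mul_apply, hgg', Module.End.one_apply]
  exact sf_eq_zero_of_snd_eq_zero hp (hgW w hw)

end Statement15
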